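/- arXiv:2512.12619 — 7 statements merged into one kernel-verified Lean document; each statement's English description precedes it below -/
import Mathlib

section
/- Let β_FF, β_FB, β_BF, β_BB be nonnegative real numbers, let φ be a real number, and let A_FF, A_FB, A_BF, A_BB be complex numbers. Then the determinant of the C-PASS effective channel matrix M satisfies det M = (A_FF·A_BB − A_FB·A_BF) · (√(β_FF·β_BB) − √(β_FB·β_BF)·e^{−2iφ}). -/
open Matrix Complex

/-- The C-PASS effective channel matrix. -/
noncomputable def CPASSMatrix (βFF βFB βBF βBB φ : ℝ) (AFF AFB ABF ABB : ℂ) :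
    Matrix (Fin 2) (Fin 2) ℂ :=
  !![(Real.sqrt βFF : ℂ) * AFF + (Real.sqrt βFB : ℂ) * ABF * Complex.exp (-(Complex.I * φ)),
     (Real.sqrt βFF : ℂ) * AFB + (Real.sqrt βFB : ℂ) * ABB * Complex.exp (-(Complex.I * φ));
     (Real.sqrt βBF : ℂ) * AFF * Complex.exp (-(Complex.I * φ)) + (Real.sqrt βBB : ℂ) * ABF,
     (Real.sqrt βBF : ℂ) * AFB * Complex.exp (-(Complex.I * φ)) + (Real.sqrt βBB : ℂ) * ABB]

/-- The C-PASS channel factors as `M = S * A`: the power splitting at the two feeds (with the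
in-waveguide phase on the cross terms) applied after the aggregated channel. -/
noncomputable def splittingMatrix (βFF βFB βBF βBB φ : ℝ) : Matrix (Fin 2) (Fin 2) ℂ :=
  !![(Real.sqrt βFF : ℂ), (Real.sqrt βFB : ℂ) * Complex.exp (-(Complex.I * φ));
     (Real.sqrt βBF : ℂ) * Complex.exp (-(Complex.I * φ)), (Real.sqrt βBB : ℂ)]

theorem CPASSMatrix_eq_splittingMatrix_mul (βFF βFB βBF βBB φ : ℝ) (AFF AFB ABF ABB : ℂ) :
    CPASSMatrix βFF βFB βBF βBB φ AFF AFB ABF ABB =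
      splittingMatrix βFF βFB βBF βBB φ * !![AFF, AFB; ABF, ABB] := by
  ext i j
  fin_cases i <;> fin_cases j <;> simp [CPASSMatrix, splittingMatrix] <;> ring

theorem det_splittingMatrix {βFF βFB βBF βBB : ℝ} (hFF : 0 ≤ βFF) (hFB : 0 ≤ βFB) (φ : ℝ) :
    (splittingMatrix βFF βFB βBF βBB φ).det =
      (Real.sqrt (βFF * βBB) : ℂ) -
        (Real.sqrt (βFB * βBF) : ℂ) * Complex.exp (-(2 * Complex.I * φ)) := by
  have hexp : Complex.exp (-(2 * Complex.I * φ)) = Complex.exp (-(Complex.I * φ)) ^ 2 := by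
    rw [← Complex.exp_nat_mul]; ring_nf
  rw [splittingMatrix, det_fin_two_of, Real.sqrt_mul hFF, Real.sqrt_mul hFB, hexp]
  push_cast
  ring

theorem cpass_det_general (βFF βFB βBF βBB : ℝ) (hFF : 0 ≤ βFF) (hFB : 0 ≤ βFB)
    (φ : ℝ) (AFF AFB ABF ABB : ℂ) :
    (CPASSMatrix βFF βFB βBF βBB φ AFF AFB ABF ABB).det =
      (AFF * ABB - AFB * ABF) *
        ((Real.sqrt (βFF * βBB) : ℂ) -
          (Real.sqrt (βFB * βBF) : ℂ) * Complex.exp (-(2 * Complex.I * φ))) := by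
  rw [CPASSMatrix_eq_splittingMatrix_mul, det_mul, det_splittingMatrix hFF hFB, det_fin_two_of,
    mul_comm]

theorem cpass_det (βFF βFB βBF βBB : ℝ) (hFF : 0 ≤ βFF) (hFB : 0 ≤ βFB)
    (hBF : 0 ≤ βBF) (hBB : 0 ≤ βBB) (φ : ℝ) (AFF AFB ABF ABB : ℂ) :
    (CPASSMatrix βFF βFB βBF βBB φ AFF AFB ABF ABB).det =
      (AFF * ABB - AFB * ABF) *
        ((Real.sqrt (βFF * βBB) : ℂ) -
          (Real.sqrt (βFB * βBF) : ℂ) * Complex.exp (-(2 * Complex.I * φ))) :=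
  cpass_det_general βFF βFB βBF βBB hFF hFB φ AFF AFB ABF ABB
end

section
/- Let β_FF, β_FB, β_BF, β_BB be nonnegative real numbers with β_FF·β_BB > 0, and let φ ∈ ℝ. If it is not the case that both e^{−2iφ} = 1 and β_FF·β_BB = β_FB·β_BF, then √(β_FF·β_BB) − √(β_FB·β_BF)·e^{−2iφ} ≠ 0 (as a complex number). Consequently, if in addition A_FF·A_BB − A_FB·A_BF ≠ 0, the C-PASS effective channel matrix M has rank 2. -/
open Matrix Complex

theorem cpass_full_rank (βFF βFB βBF βBB : ℝ) (hFF : 0 ≤ βFF) (hFB : 0 ≤ βFB)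
    (hBF : 0 ≤ βBF) (hBB : 0 ≤ βBB) (hpos : 0 < βFF * βBB) (φ : ℝ)
    (hne : ¬ (Complex.exp (-(2 * Complex.I * φ)) = 1 ∧ βFF * βBB = βFB * βBF)) :
    ((Real.sqrt (βFF * βBB) : ℂ) -
        (Real.sqrt (βFB * βBF) : ℂ) * Complex.exp (-(2 * Complex.I * φ)) ≠ 0) ∧
      (∀ AFF AFB ABF ABB : ℂ, AFF * ABB - AFB * ABF ≠ 0 →
        (CPASSMatrix βFF βFB βBF βBB φ AFF AFB ABF ABB).rank = 2) := by
  set s : ℝ := Real.sqrt (βFF * βBB) with hs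
  set t : ℝ := Real.sqrt (βFB * βBF) with ht
  have hspos : 0 < s := Real.sqrt_pos.mpr hpos
  have htnn : 0 ≤ t := Real.sqrt_nonneg _
  set e : ℂ := Complex.exp (-(2 * Complex.I * φ)) with he
  have habs : ‖e‖ = 1 := by
    rw [he]
    have : -(2 * Complex.I * (φ : ℂ)) = ((-(2 * φ) : ℝ) : ℂ) * Complex.I := by
      push_cast; ring
    rw [this, Complex.norm_exp_ofReal_mul_I]
  have hkey : (s : ℂ) - (t : ℂ) * e ≠ 0 := by
    intro h
    have hte : (t : ℂ) * e = (s : ℂ) := by linear_combination -h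
    have hts : t = s := by
      have := congrArg (‖·‖) hte
      simpa [Complex.norm_real, habs, _root_.abs_of_nonneg htnn, _root_.abs_of_pos hspos] using this
    have htpos : (0 : ℝ) < t := hts ▸ hspos
    have he1 : e = 1 := by
      have : (t : ℂ) * e = (t : ℂ) * 1 := by rw [mul_one, hte, hts]
      exact mul_left_cancel₀ (by exact_mod_cast htpos.ne') this
    have hβ : βFF * βBB = βFB * βBF := by
      have := hts
      rw [hs, ht] at this
      nlinarith [Real.sq_sqrt (mul_nonneg hFB hBF), Real.sq_sqrt hpos.le, this]
    exact hne ⟨he1, hβ⟩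
  refine ⟨hkey, fun AFF AFB ABF ABB hA => ?_⟩
  have hdet : (CPASSMatrix βFF βFB βBF βBB φ AFF AFB ABF ABB).det =
      ((s : ℂ) - (t : ℂ) * e) * (AFF * ABB - AFB * ABF) := by
    rw [CPASSMatrix, Matrix.det_fin_two_of]
    have hEE : Complex.exp (-(Complex.I * φ)) * Complex.exp (-(Complex.I * φ)) = e := by
      rw [← Complex.exp_add, he]; ring_nf
    have h1 : (Real.sqrt βFF : ℂ) * (Real.sqrt βBB : ℂ) = (s : ℂ) := by
      rw [hs, Real.sqrt_mul hFF]; push_cast; ring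
    have h2 : (Real.sqrt βFB : ℂ) * (Real.sqrt βBF : ℂ) = (t : ℂ) := by
      rw [ht, Real.sqrt_mul hFB]; push_cast; ring
    linear_combination (ABF * AFB - ABB * AFF) * e * h2 + (ABB * AFF - ABF * AFB) * h1 +
      (Real.sqrt βFB : ℂ) * (Real.sqrt βBF : ℂ) * (ABF * AFB - ABB * AFF) * hEE
  have hunit : IsUnit (CPASSMatrix βFF βFB βBF βBB φ AFF AFB ABF ABB) := by
    rw [Matrix.isUnit_iff_isUnit_det, hdet]
    exact (mul_ne_zero hkey hA).isUnit
  rw [Matrix.rank_of_isUnit _ hunit]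
  simp
end

section
/- Let H be a 2×2 complex matrix with det H ≠ 0, and let N₀ > 0 be a real number. Then the function P ↦ log₂( Re( det( I₂ + (P/(2·N₀))·H·Hᴴ ) ) ) / log₂(P / N₀) tends to 2 as the real variable P tends to +∞. (This is the C-PASS part of Theorem 1: the DoF of the center-fed PASS equals 2.) -/
open Matrix Complex Filter

lemma aux_limit (T D : ℝ) (hT : 0 ≤ T) (hD : 0 < D) :
    Tendsto (fun x : ℝ => Real.logb 2 (1 + x / 2 * T + (x / 2) ^ 2 * D) / Real.logb 2 x)
      atTop (nhds 2) := by
  have hlogb : Tendsto (fun x : ℝ => Real.logb 2 x) atTop atTop :=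
    Real.tendsto_logb_atTop one_lt_two
  have hratio : Tendsto (fun x : ℝ => (1 + x / 2 * T + (x / 2) ^ 2 * D) / x ^ 2)
      atTop (nhds (D / 4)) := by
    have h0 : Tendsto (fun x : ℝ => x⁻¹) atTop (nhds 0) := tendsto_inv_atTop_zero
    have h1 : Tendsto (fun x : ℝ => x⁻¹ ^ 2 + T / 2 * x⁻¹ + D / 4) atTop
        (nhds ((0:ℝ) ^ 2 + T / 2 * 0 + D / 4)) :=
      ((h0.pow 2).add (tendsto_const_nhds.mul h0)).add tendsto_const_nhds
    have h2 : ((0:ℝ) ^ 2 + T / 2 * 0 + D / 4) = D / 4 := by ring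
    rw [h2] at h1
    refine h1.congr' ?_
    filter_upwards [eventually_gt_atTop 0] with x hx
    field_simp
    ring
  have hlog2 : Tendsto (fun x : ℝ =>
      Real.logb 2 ((1 + x / 2 * T + (x / 2) ^ 2 * D) / x ^ 2))
      atTop (nhds (Real.logb 2 (D / 4))) := by
    have hc : ContinuousAt (Real.logb 2) (D / 4) := by
      unfold Real.logb
      exact (Real.continuousAt_log (by positivity)).div_const _
    exact hc.tendsto.comp hratio
  have hzero : Tendsto (fun x : ℝ =>
      Real.logb 2 ((1 + x / 2 * T + (x / 2) ^ 2 * D) / x ^ 2) / Real.logb 2 x)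
      atTop (nhds 0) := hlog2.div_atTop hlogb
  have hsum := (tendsto_const_nhds (x := (2:ℝ)) (f := atTop)).add hzero
  rw [add_zero] at hsum
  refine hsum.congr' ?_
  filter_upwards [eventually_ge_atTop 2] with x hx
  have hx0 : (0:ℝ) < x := by linarith
  have hg : 0 < 1 + x / 2 * T + (x / 2) ^ 2 * D := by positivity
  have hlx : 0 < Real.logb 2 x := Real.logb_pos one_lt_two (by linarith)
  rw [Real.logb_div (ne_of_gt hg) (by positivity), Real.logb_pow]
  field_simp
  push_cast
  ring

theorem cpass_dof_two (H : Matrix (Fin 2) (Fin 2) ℂ) (hdet : H.det ≠ 0)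
    (N₀ : ℝ) (hN₀ : 0 < N₀) :
    Tendsto (fun P : ℝ =>
        Real.logb 2 ((1 + ((P / (2 * N₀) : ℝ) : ℂ) • (H * Hᴴ)).det.re) /
          Real.logb 2 (P / N₀))
      atTop (nhds 2) := by
  set T : ℝ := (H * Hᴴ).trace.re with hTdef
  set D : ℝ := Complex.normSq H.det with hDdef
  have hD : 0 < D := Complex.normSq_pos.mpr hdet
  have htr : (H * Hᴴ).trace = ((∑ i, ∑ k, Complex.normSq (H i k) : ℝ) : ℂ) := by
    push_cast
    simp [Matrix.trace, Matrix.diag, Matrix.mul_apply, Matrix.conjTranspose_apply,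
      Complex.mul_conj]
  have hT : 0 ≤ T := by
    rw [hTdef, htr, Complex.ofReal_re]
    refine Finset.sum_nonneg fun i _ => Finset.sum_nonneg fun k _ => Complex.normSq_nonneg _
  have hdetM : (H * Hᴴ).det = (D : ℂ) := by
    rw [Matrix.det_mul, Matrix.det_conjTranspose, hDdef]
    exact Complex.mul_conj _
  have key : ∀ P : ℝ, ((1 + ((P / (2 * N₀) : ℝ) : ℂ) • (H * Hᴴ)).det).re
      = 1 + (P / N₀) / 2 * T + ((P / N₀) / 2) ^ 2 * D := by
    intro P
    have hdet2 : ((1 : Matrix (Fin 2) (Fin 2) ℂ) + ((P / (2 * N₀) : ℝ) : ℂ) • (H * Hᴴ)).det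
        = 1 + ((P / (2 * N₀) : ℝ) : ℂ) * (H * Hᴴ).trace
          + ((P / (2 * N₀) : ℝ) : ℂ) ^ 2 * (H * Hᴴ).det := by
      simp [Matrix.det_fin_two, Matrix.trace_fin_two, Matrix.add_apply,
        Matrix.smul_apply, Matrix.one_apply, smul_eq_mul, Matrix.mul_apply,
        Matrix.conjTranspose_apply, Fin.sum_univ_two]
      ring
    rw [hdet2, hdetM, htr]
    have hTs : T = ∑ i, ∑ k, Complex.normSq (H i k) := by
      rw [hTdef, htr, Complex.ofReal_re]
    simp only [← Complex.ofReal_pow, ← Complex.ofReal_mul, ← Complex.ofReal_one,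
      ← Complex.ofReal_add, Complex.ofReal_re]
    rw [hTs]
    ring
  have hcomp : Tendsto (fun P : ℝ => P / N₀) atTop atTop :=
    tendsto_id.atTop_div_const hN₀
  have hmain := (aux_limit T D hT hD).comp hcomp
  refine hmain.congr ?_
  intro P
  simp only [Function.comp]
  rw [key P]
end

section
/- Let H be a nonzero 2×2 complex matrix with det H = 0, and let N₀ > 0 be a real number. Then the function P ↦ log₂( Re( det( I₂ + (P/(2·N₀))·H·Hᴴ ) ) ) / log₂(P / N₀) tends to 1 as the real variable P tends to +∞. (This is the end-fed part of Theorem 1: the DoF of the conventional end-fed PASS equals 1.) -/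
open Matrix Complex Filter

private lemma lim_aux (c N₀ : ℝ) (hc : 0 < c) (hN₀ : 0 < N₀) :
    Tendsto (fun P : ℝ => Real.log (1 + c * P) / Real.log (P / N₀)) atTop (nhds 1) := by
  have h1 : Tendsto (fun P : ℝ => Real.log (1 / P + c) / Real.log P) atTop (nhds 0) := by
    apply Tendsto.div_atTop (a := Real.log c) _ Real.tendsto_log_atTop
    have hin : Tendsto (fun P : ℝ => 1 / P + c) atTop (nhds c) := by
      have := (tendsto_inv_atTop_zero (𝕜 := ℝ)).add (tendsto_const_nhds (x := c))
      simpa [one_div] using this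
    exact (Real.continuousAt_log hc.ne').tendsto.comp hin
  have h2 : Tendsto (fun P : ℝ => Real.log N₀ / Real.log P) atTop (nhds 0) :=
    Tendsto.div_atTop tendsto_const_nhds Real.tendsto_log_atTop
  have main : Tendsto (fun P : ℝ =>
      (1 + Real.log (1 / P + c) / Real.log P) / (1 - Real.log N₀ / Real.log P))
      atTop (nhds 1) := by
    have := ((tendsto_const_nhds (x := (1:ℝ))).add h1).div
      ((tendsto_const_nhds (x := (1:ℝ))).sub h2) (by norm_num)
    rw [add_zero, sub_zero, div_one] at this
    exact this
  apply main.congr'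
  filter_upwards [eventually_gt_atTop (1 : ℝ),
    Real.tendsto_log_atTop.eventually_gt_atTop (Real.log N₀)] with P hP1 hPN
  have hP0 : 0 < P := lt_trans one_pos hP1
  have hL : Real.log P ≠ 0 := (Real.log_pos hP1).ne'
  have hLb : Real.log P - Real.log N₀ ≠ 0 := sub_ne_zero.2 hPN.ne'
  have e1 : Real.log (1 + c * P) = Real.log P + Real.log (1 / P + c) := by
    rw [← Real.log_mul hP0.ne' (by positivity)]
    congr 1
    field_simp
  have e2 : Real.log (P / N₀) = Real.log P - Real.log N₀ :=
    Real.log_div hP0.ne' hN₀.ne'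
  rw [e1, e2]
  field_simp

theorem endfed_dof_one (H : Matrix (Fin 2) (Fin 2) ℂ) (hH : H ≠ 0) (hdet : H.det = 0)
    (N₀ : ℝ) (hN₀ : 0 < N₀) :
    Tendsto (fun P : ℝ =>
        Real.logb 2 ((1 + ((P / (2 * N₀) : ℝ) : ℂ) • (H * Hᴴ)).det.re) /
          Real.logb 2 (P / N₀))
      atTop (nhds 1) := by
  set t : ℝ := ∑ i, ∑ j, Complex.normSq (H i j) with ht
  have htr : (H * Hᴴ).trace = (t : ℂ) := by
    simp [Matrix.trace, Matrix.mul_apply, Matrix.diag, Matrix.conjTranspose_apply,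
      Complex.mul_conj, ht]
  have htpos : 0 < t := by
    have : ∃ i j, H i j ≠ 0 := by
      by_contra h
      push_neg at h
      exact hH (by ext i j; simp [h])
    obtain ⟨i, j, hij⟩ := this
    calc 0 < Complex.normSq (H i j) := Complex.normSq_pos.2 hij
      _ ≤ ∑ j, Complex.normSq (H i j) :=
        Finset.single_le_sum (fun _ _ => Complex.normSq_nonneg _) (Finset.mem_univ j)
      _ ≤ t := Finset.single_le_sum
        (fun _ _ => Finset.sum_nonneg fun _ _ => Complex.normSq_nonneg _) (Finset.mem_univ i)
  have hA : (H * Hᴴ).det = 0 := by rw [det_mul, det_conjTranspose, hdet, zero_mul]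
  have key : ∀ x : ℝ, (1 + (x : ℂ) • (H * Hᴴ)).det.re = 1 + x * t := by
    intro x
    have hdet2 : (1 + (x : ℂ) • (H * Hᴴ)).det = 1 + (x : ℂ) * (H * Hᴴ).trace := by
      rw [Matrix.det_fin_two] at hA ⊢
      simp only [Matrix.trace_fin_two, Matrix.add_apply, Matrix.smul_apply, Matrix.one_apply,
        smul_eq_mul]
      norm_num
      linear_combination (x : ℂ) ^ 2 * hA
    rw [hdet2, htr]
    norm_num [← Complex.ofReal_mul]
  set c : ℝ := t / (2 * N₀) with hc
  have hcpos : 0 < c := by positivity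
  have hlog2 : Real.log 2 ≠ 0 := by
    exact ne_of_gt (Real.log_pos one_lt_two)
  have := lim_aux c N₀ hcpos hN₀
  apply this.congr
  intro P
  have harg : (1 + ((P / (2 * N₀) : ℝ) : ℂ) • (H * Hᴴ)).det.re = 1 + c * P := by
    rw [key]
    rw [hc]; ring
  rw [harg]
  simp only [Real.logb]
  rw [div_div_div_cancel_right₀ hlog2]
end

section
/- Let φ ∈ ℝ, let A_FF, A_FB, A_BF, A_BB be complex numbers, and let P > 0 and N₀ > 0 be real. For the C-PASS effective channel matrix M with all power-splitting ratios equal to 1/2 (β_FF = β_FB = β_BF = β_BB = 1/2), the multiplexing gain satisfies (P/(2·N₀))·|det M|² = (P/(4·N₀))·(1 − cos(2φ))·|A_FF·A_BB − A_FB·A_BF|². -/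
open Matrix Complex

theorem cpass_multiplexing_gain_half (φ : ℝ) (AFF AFB ABF ABB : ℂ) (P N₀ : ℝ)
    (hP : 0 < P) (hN₀ : 0 < N₀) :
    (P / (2 * N₀)) *
        (‖(CPASSMatrix (1/2) (1/2) (1/2) (1/2) φ AFF AFB ABF ABB).det‖)^2 =
      (P / (4 * N₀)) * (1 - Real.cos (2 * φ)) *
        (‖AFF * ABB - AFB * ABF‖)^2 := by
  have hs : ((Real.sqrt (1/2) : ℝ) : ℂ) * ((Real.sqrt (1/2) : ℝ) : ℂ) = (1/2 : ℂ) := by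
    rw [← Complex.ofReal_mul, Real.mul_self_sqrt (by norm_num : (0:ℝ) ≤ 1/2)]
    norm_num
  have hee : Complex.exp (-(Complex.I * φ)) * Complex.exp (-(Complex.I * φ))
      = Complex.exp (-(Complex.I * (2 * φ))) := by
    rw [← Complex.exp_add]; ring_nf
  have hdet : (CPASSMatrix (1/2) (1/2) (1/2) (1/2) φ AFF AFB ABF ABB).det
      = (1/2 : ℂ) * (1 - Complex.exp (-(Complex.I * (2 * φ)))) * (AFF * ABB - AFB * ABF) := by
    simp only [CPASSMatrix, Matrix.det_fin_two_of]
    rw [← hee]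
    linear_combination (AFB * ABB - AFB * ABB * Complex.exp (-(Complex.I * φ)) *
      Complex.exp (-(Complex.I * φ)) + AFF * ABB - AFB * ABF -
      (AFF * ABB - AFB * ABF) * Complex.exp (-(Complex.I * φ)) * Complex.exp (-(Complex.I * φ))
      - AFB * ABB + AFB * ABB * Complex.exp (-(Complex.I * φ)) * Complex.exp (-(Complex.I * φ)))
      * hs
  have habs : (‖1 - Complex.exp (-(Complex.I * (2 * φ)))‖)^2
      = 2 - 2 * Real.cos (2 * φ) := by
    have h : -(Complex.I * (2 * φ)) = ((-(2*φ) : ℝ) : ℂ) * Complex.I := by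
      push_cast; ring
    rw [h, Complex.sq_norm, Complex.normSq_apply]
    simp only [Complex.sub_re, Complex.one_re, Complex.sub_im, Complex.one_im,
      Complex.exp_ofReal_mul_I_re, Complex.exp_ofReal_mul_I_im, Real.cos_neg, Real.sin_neg]
    nlinarith [Real.sin_sq_add_cos_sq (2 * φ)]
  rw [hdet]
  simp only [norm_mul, mul_pow, habs, norm_div, norm_one, Complex.norm_two]
  field_simp
  ring
end

section
/- Let k be an integer and set φ = (π/2)·(1 + 2k), and let A_FF, A_FB, A_BF, A_BB be complex numbers. For the C-PASS effective channel matrix M with all power-splitting ratios equal to 1/2, one has ‖M‖_F² = |A_FF|² + |A_FB|² + |A_BF|² + |A_BB|² and |det M|² = |A_FF·A_BB − A_FB·A_BF|². (This corresponds to the input-port separation L_in = (λ_g/4)(1+2k) that maximizes the multiplexing capability while preserving the array gain.) -/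
open Matrix Complex

theorem cpass_quarter_wavelength (k : ℤ) (φ : ℝ) (hφ : φ = (Real.pi / 2) * (1 + 2 * k))
    (AFF AFB ABF ABB : ℂ) :
    (∑ i : Fin 2, ∑ j : Fin 2,
        (‖(CPASSMatrix (1/2) (1/2) (1/2) (1/2) φ AFF AFB ABF ABB) i j‖)^2) =
      (‖AFF‖)^2 + (‖AFB‖)^2 + (‖ABF‖)^2 + (‖ABB‖)^2
    ∧
    (‖(CPASSMatrix (1/2) (1/2) (1/2) (1/2) φ AFF AFB ABF ABB).det‖)^2 =
      (‖AFF * ABB - AFB * ABF‖)^2 := by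
  have hε2 : Complex.exp (-(Complex.I * φ)) * Complex.exp (-(Complex.I * φ)) = -1 := by
    rw [← Complex.exp_add]
    have h : -(Complex.I * (φ:ℂ)) + -(Complex.I * (φ:ℂ))
        = (↑Real.pi * Complex.I) + ((-(k+1) : ℤ)) * (2 * ↑Real.pi * Complex.I) := by
      rw [hφ]; push_cast; ring
    rw [h, Complex.exp_add, Complex.exp_int_mul_two_pi_mul_I, Complex.exp_pi_mul_I]; ring
  have hcases : Complex.exp (-(Complex.I * φ)) = Complex.I ∨
      Complex.exp (-(Complex.I * φ)) = -Complex.I := by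
    have h0 : (Complex.exp (-(Complex.I * φ)) - Complex.I) *
        (Complex.exp (-(Complex.I * φ)) + Complex.I) = 0 := by
      linear_combination hε2 - Complex.I_mul_I
    rcases mul_eq_zero.mp h0 with h | h
    · exact Or.inl (sub_eq_zero.mp h)
    · exact Or.inr (eq_neg_of_add_eq_zero_left h)
  have hrr : Real.sqrt (1/2) * Real.sqrt (1/2) = 1/2 := Real.mul_self_sqrt (by norm_num)
  have hrC : (Real.sqrt (1/2) : ℂ) * (Real.sqrt (1/2) : ℂ) = 1/2 := by
    rw [← Complex.ofReal_mul, hrr]; norm_num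
  constructor
  · rcases hcases with h | h <;>
    · simp only [Complex.sq_norm, CPASSMatrix, h, Fin.sum_univ_two, Matrix.cons_val',
        Matrix.cons_val_zero, Matrix.cons_val_one, Matrix.head_cons, Matrix.empty_val',
        Matrix.cons_val_fin_one, Matrix.head_fin_const, Matrix.of_apply, Complex.normSq_apply]
      simp only [Complex.add_re, Complex.add_im, Complex.mul_re, Complex.mul_im,
        Complex.I_re, Complex.I_im, Complex.neg_re, Complex.neg_im, Complex.ofReal_re,
        Complex.ofReal_im]
      linear_combination (2*(AFF.re^2+AFF.im^2+AFB.re^2+AFB.im^2+ABF.re^2+ABF.im^2+ABB.re^2+ABB.im^2)) * hrr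
  · rcases hcases with h | h <;>
    · have hdet : (CPASSMatrix (1/2) (1/2) (1/2) (1/2) φ AFF AFB ABF ABB).det
          = AFF * ABB - AFB * ABF := by
        simp only [CPASSMatrix, h, Matrix.det_fin_two_of]
        linear_combination (2 * (AFF * ABB - AFB * ABF)) * hrC + ((Real.sqrt (1/2) : ℂ) * (Real.sqrt (1/2) : ℂ) * (ABF * AFB - AFF * ABB)) * Complex.I_sq
      rw [hdet]
end

section
/- Let Y_F > 0, Y_B > 0, L > 0, and η ≠ 0 be real numbers. Define the dominant phase-aligned channel gains Ā_F(N) = (η/√N)·S_N(Y_F, L) and Ā_B(N) = (η/√N)·S_N(Y_B, L). Then the array gain G_A(N) = Ā_F(N)² + Ā_B(N)² satisfies: N·G_A(N) / (ln N)² tends to 2·η²/L² as N tends to infinity. In particular the array gain of the C-PASS scales as Θ((ln N)²/N) (the array-gain part of Theorem 2). -/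
open Filter Finset

/-- The phase-aligned channel sum `S_N(Y, L) = ∑_{n=1}^N 1/√(Y² + L²·n²)`. -/
noncomputable def channelSum (Y L : ℝ) (N : ℕ) : ℝ :=
  ∑ n ∈ Finset.Icc 1 N, 1 / Real.sqrt (Y^2 + L^2 * (n : ℝ)^2)

lemma shifted_harmonic (k : ℕ) : ∀ N : ℕ, ∑ n ∈ Finset.Icc 1 N, (1:ℝ)/((n:ℝ)+k)
    = (harmonic (N+k) : ℝ) - (harmonic k : ℝ) := by
  intro N
  induction N with
  | zero => simp
  | succ N ih =>
    rw [Finset.sum_Icc_succ_top (by omega), ih, show N+1+k = (N+k)+1 by ring, harmonic_succ]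
    push_cast
    ring

lemma harmonic_real (N : ℕ) : (harmonic N : ℝ) = ∑ n ∈ Finset.Icc 1 N, (1:ℝ)/(n:ℝ) := by
  rw [harmonic_eq_sum_Icc]
  push_cast
  simp [one_div]

lemma harmonic_mono_real (N k : ℕ) : (harmonic N : ℝ) ≤ (harmonic (N+k) : ℝ) := by
  have : harmonic N ≤ harmonic (N+k) := by
    induction k with
    | zero => simp
    | succ k ih =>
      rw [show N+(k+1) = (N+k)+1 by ring, harmonic_succ]
      have : (0:ℚ) < (↑(N+k+1) : ℚ)⁻¹ := by positivity
      linarith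
  exact_mod_cast this

lemma base_tendsto (c : ℝ) :
    Tendsto (fun N : ℕ => ((harmonic N : ℝ) - c) / Real.log N) atTop (nhds 1) := by
  have hlog : Tendsto (fun N : ℕ => Real.log N) atTop atTop :=
    Real.tendsto_log_atTop.comp tendsto_natCast_atTop_atTop
  have h1 : Tendsto (fun N : ℕ => ((harmonic N : ℝ) - Real.log N) / Real.log N) atTop (nhds 0) :=
    Real.tendsto_harmonic_sub_log.div_atTop hlog
  have h2 : Tendsto (fun N : ℕ => c / Real.log N) atTop (nhds 0) :=
    tendsto_const_nhds.div_atTop hlog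
  have h3 : Tendsto (fun N : ℕ =>
      ((harmonic N : ℝ) - Real.log N) / Real.log N - c / Real.log N + 1) atTop (nhds 1) := by
    have := (h1.sub h2).add_const 1
    simpa using this
  refine h3.congr' ?_
  filter_upwards [eventually_ge_atTop 2] with N hN
  have hl : Real.log N ≠ 0 := by
    have : (1:ℝ) < (N:ℝ) := by exact_mod_cast hN.trans_lt' one_lt_two
    exact ne_of_gt (Real.log_pos this)
  field_simp
  ring

lemma channelSum_div_log (Y L : ℝ) (hY : 0 < Y) (hL : 0 < L) :
    Tendsto (fun N : ℕ => channelSum Y L N / Real.log N) atTop (nhds (1/L)) := by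
  set k := ⌈Y/L⌉₊ with hk
  have hYLk : Y ≤ L * k := by
    have h1 : Y / L ≤ (k : ℝ) := Nat.le_ceil _
    calc Y = L * (Y / L) := by field_simp
    _ ≤ L * k := by nlinarith
  have hknn : (0:ℝ) ≤ (k:ℝ) := Nat.cast_nonneg k
  -- pointwise bounds on channelSum
  have hlow : ∀ N : ℕ, ((harmonic N : ℝ) - harmonic k) / L ≤ channelSum Y L N := by
    intro N
    have h1 : ∑ n ∈ Finset.Icc 1 N, (1:ℝ)/(L*((n:ℝ)+k)) ≤ channelSum Y L N := by
      apply Finset.sum_le_sum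
      intro n hn
      have hn1 : 1 ≤ n := (Finset.mem_Icc.mp hn).1
      have hnpos : (0:ℝ) < n := by exact_mod_cast hn1
      have hsq : Real.sqrt (Y^2 + L^2 * (n:ℝ)^2) ≤ L*((n:ℝ)+k) := by
        rw [show L*((n:ℝ)+k) = Real.sqrt ((L*((n:ℝ)+k))^2) from
          (Real.sqrt_sq (by positivity)).symm]
        apply Real.sqrt_le_sqrt
        nlinarith [mul_le_mul hYLk hYLk hY.le (by positivity : (0:ℝ) ≤ L*k),
          mul_nonneg (mul_nonneg (mul_nonneg hL.le hL.le) hnpos.le) hknn]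
      have hpos : (0:ℝ) < Real.sqrt (Y^2 + L^2 * (n:ℝ)^2) := Real.sqrt_pos.mpr (by positivity)
      exact one_div_le_one_div_of_le hpos hsq
    have h2 : ∑ n ∈ Finset.Icc 1 N, (1:ℝ)/(L*((n:ℝ)+k))
        = ((harmonic (N+k) : ℝ) - harmonic k) / L := by
      rw [← shifted_harmonic k N, Finset.sum_div]
      apply Finset.sum_congr rfl
      intro n hn
      rw [div_div]
      ring_nf
    have h3 := harmonic_mono_real N k
    have h4 : ((harmonic N : ℝ) - harmonic k) / L
        ≤ ((harmonic (N+k) : ℝ) - harmonic k) / L := by gcongr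
    linarith [h2 ▸ h1]
  have hup : ∀ N : ℕ, channelSum Y L N ≤ (harmonic N : ℝ) / L := by
    intro N
    have h1 : channelSum Y L N ≤ ∑ n ∈ Finset.Icc 1 N, (1:ℝ)/(L*(n:ℝ)) := by
      apply Finset.sum_le_sum
      intro n hn
      have hn1 : 1 ≤ n := (Finset.mem_Icc.mp hn).1
      have hnpos : (0:ℝ) < n := by exact_mod_cast hn1
      have hsq : L*(n:ℝ) ≤ Real.sqrt (Y^2 + L^2 * (n:ℝ)^2) := by
        rw [show L*(n:ℝ) = Real.sqrt ((L*(n:ℝ))^2) from (Real.sqrt_sq (by positivity)).symm]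
        apply Real.sqrt_le_sqrt
        nlinarith
      exact one_div_le_one_div_of_le (by positivity) hsq
    have h2 : ∑ n ∈ Finset.Icc 1 N, (1:ℝ)/(L*(n:ℝ)) = (harmonic N : ℝ) / L := by
      rw [harmonic_real, Finset.sum_div]
      apply Finset.sum_congr rfl
      intro n hn
      rw [div_div]
      ring_nf
    linarith [h1.trans_eq h2]
  -- squeeze
  have hl := (base_tendsto (harmonic k : ℝ)).div_const L
  have hu := (base_tendsto 0).div_const L
  refine tendsto_of_tendsto_of_tendsto_of_le_of_le' hl hu ?_ ?_
  · filter_upwards [eventually_ge_atTop 2] with N hN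
    have hlpos : (0:ℝ) ≤ Real.log N :=
      (Real.log_pos (by exact_mod_cast hN.trans_lt' one_lt_two)).le
    rw [div_right_comm]
    gcongr
    exact hlow N
  · filter_upwards [eventually_ge_atTop 2] with N hN
    have hlpos : (0:ℝ) ≤ Real.log N :=
      (Real.log_pos (by exact_mod_cast hN.trans_lt' one_lt_two)).le
    rw [div_right_comm, sub_zero]
    gcongr
    exact hup N

theorem cpass_array_gain_scaling (YF YB L η : ℝ) (hYF : 0 < YF) (hYB : 0 < YB)
    (hL : 0 < L) (hη : η ≠ 0) :
    Tendsto (fun N : ℕ =>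
        (N : ℝ) *
          (((η / Real.sqrt N) * channelSum YF L N)^2 +
            ((η / Real.sqrt N) * channelSum YB L N)^2) / (Real.log N)^2)
      atTop (nhds (2 * η^2 / L^2)) := by
  have hF := channelSum_div_log YF L hYF hL
  have hB := channelSum_div_log YB L hYB hL
  have h : Tendsto (fun N : ℕ =>
      η^2 * ((channelSum YF L N / Real.log N)^2 + (channelSum YB L N / Real.log N)^2))
      atTop (nhds (η^2 * ((1/L)^2 + (1/L)^2))) :=
    tendsto_const_nhds.mul (((hF.pow 2)).add ((hB.pow 2)))
  have heq : (2 : ℝ) * η^2 / L^2 = η^2 * ((1/L)^2 + (1/L)^2) := by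
    field_simp
    ring
  rw [heq]
  refine h.congr ?_
  intro N
  have hs : Real.sqrt N ^ 2 = (N : ℝ) := Real.sq_sqrt (Nat.cast_nonneg N)
  rcases eq_or_ne (N : ℝ) 0 with h0 | h0
  · simp [h0, Real.sqrt_eq_zero', div_zero]
  · have hsne : Real.sqrt N ≠ 0 := by
      intro h
      rw [h] at hs
      simp at hs
      exact h0 hs.symm
    rcases eq_or_ne (Real.log N) 0 with hl0 | hl0
    · rw [hl0]
      simp
    · rw [← hs]
      field_simp
      rw [Real.sqrt_sq (Real.sqrt_nonneg _)]
      ring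
end
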